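/- arXiv:1808.08791 — 2 statements merged into one kernel-verified Lean document; each statement's English description precedes it below -/
import Mathlib

section
/- Let Ω₁, ..., Ω_K ∈ ℝ^{v×v} be matrices and u ∈ ℝᵛ. Then the joint minimum over k ∈ {1,...,K} and z ∈ ℝᵛ of ‖Ω_k u − z‖₂² + γ²‖z‖₀ is achieved by first hard-thresholding each Ω_k u with threshold γ and then picking the class k minimizing Σᵢ min((Ω_k u)ᵢ², γ²); i.e., the clustering-and-sparse-coding subproblem has an exact closed-form solution. -/
/-!
The objective separates over coordinates: for a single coordinate, `(w - z)² + γ² [z ≠ 0]` is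
at least `min (w², γ²)` (take `z = 0`, or pay `γ²`), with equality at the hard-thresholded value
of `w`. Hence the best sparse code for class `k` costs exactly `∑ᵢ min ((Ω_k u)ᵢ², γ²)`, and the
joint minimum is attained at the class minimizing this sum.
-/

open scoped Classical
open Matrix

namespace SparseCoding

noncomputable def hardThreshold (γ w : ℝ) : ℝ := if γ < |w| then w else 0

noncomputable def coordCost (γ w z : ℝ) : ℝ := (w - z) ^ 2 + γ ^ 2 * if z ≠ 0 then 1 else 0

lemma min_sq_le_coordCost (γ w z : ℝ) : min (w ^ 2) (γ ^ 2) ≤ coordCost γ w z := by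
  unfold coordCost
  by_cases hz : z = 0
  · simp [hz]
  · simp only [ne_eq, hz, not_false_eq_true, if_true, mul_one]
    nlinarith [min_le_right (w ^ 2) (γ ^ 2), sq_nonneg (w - z)]

lemma coordCost_hardThreshold {γ : ℝ} (hγ : 0 ≤ γ) (w : ℝ) :
    coordCost γ w (hardThreshold γ w) = min (w ^ 2) (γ ^ 2) := by
  unfold coordCost hardThreshold
  by_cases h : γ < |w|
  · have hw : w ≠ 0 := by rintro rfl; simp at h; linarith
    have : γ ^ 2 ≤ w ^ 2 := by rw [← sq_abs w]; exact pow_le_pow_left₀ hγ h.le 2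
    simp [h, hw, min_eq_right this]
  · have : w ^ 2 ≤ γ ^ 2 := by rw [← sq_abs w]; exact pow_le_pow_left₀ (abs_nonneg w) (not_lt.1 h) 2
    simp [h, min_eq_left this]

variable {ι : Type*} [Fintype ι]

noncomputable def sparseCodingCost (γ : ℝ) (w z : ι → ℝ) : ℝ :=
  ∑ i, (w i - z i) ^ 2 + γ ^ 2 * ((Finset.univ.filter (fun i => z i ≠ 0)).card : ℝ)

lemma sparseCodingCost_eq_sum_coordCost (γ : ℝ) (w z : ι → ℝ) :
    sparseCodingCost γ w z = ∑ i, coordCost γ (w i) (z i) := by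
  simp only [sparseCodingCost, coordCost, Finset.sum_add_distrib, ← Finset.mul_sum,
    Finset.card_filter, Nat.cast_sum, Nat.cast_ite, Nat.cast_one, Nat.cast_zero]

lemma sum_min_sq_le_sparseCodingCost (γ : ℝ) (w z : ι → ℝ) :
    ∑ i, min (w i ^ 2) (γ ^ 2) ≤ sparseCodingCost γ w z := by
  rw [sparseCodingCost_eq_sum_coordCost]
  exact Finset.sum_le_sum fun i _ => min_sq_le_coordCost γ (w i) (z i)

lemma sparseCodingCost_hardThreshold {γ : ℝ} (hγ : 0 ≤ γ) (w : ι → ℝ) :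
    sparseCodingCost γ w (fun i => hardThreshold γ (w i)) = ∑ i, min (w i ^ 2) (γ ^ 2) := by
  rw [sparseCodingCost_eq_sum_coordCost]
  exact Finset.sum_congr rfl fun i _ => coordCost_hardThreshold hγ (w i)

end SparseCoding

open SparseCoding in
theorem stmt4 (K v : ℕ) (Ω : Fin K → Matrix (Fin v) (Fin v) ℝ) (u : Fin v → ℝ)
    (γ : ℝ) (hγ : 0 < γ)
    (cost : Fin K → (Fin v → ℝ) → ℝ)
    (hcost : ∀ k z, cost k z = ∑ i, (((Ω k) *ᵥ u) i - z i) ^ 2 +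
      γ ^ 2 * ((Finset.univ.filter (fun i => z i ≠ 0)).card : ℝ))
    (Hγ : (Fin v → ℝ) → (Fin v → ℝ))
    (hH : ∀ w i, Hγ w i = if γ < |w i| then w i else 0)
    (khat : Fin K)
    (hkhat : ∀ k, ∑ i, min ((((Ω khat) *ᵥ u) i) ^ 2) (γ ^ 2) ≤
      ∑ i, min ((((Ω k) *ᵥ u) i) ^ 2) (γ ^ 2)) :
    ∀ k z, cost khat (Hγ ((Ω khat) *ᵥ u)) ≤ cost k z := by
  intro k z
  have hcost' : ∀ k z, cost k z = sparseCodingCost γ (Ω k *ᵥ u) z := hcost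
  have hH' : ∀ w, Hγ w = fun i => hardThreshold γ (w i) := fun w => funext (hH w)
  calc cost khat (Hγ (Ω khat *ᵥ u))
      = ∑ i, min ((Ω khat *ᵥ u) i ^ 2) (γ ^ 2) := by
        rw [hcost', hH', sparseCodingCost_hardThreshold hγ.le]
    _ ≤ ∑ i, min ((Ω k *ᵥ u) i ^ 2) (γ ^ 2) := hkhat k
    _ ≤ cost k z := by
        rw [hcost']
        exact sum_min_sq_le_sparseCodingCost γ _ z
end

section
/- The shifted-Poisson data-fidelity function h(l) = (I₀e^{-l} + σ²) − Y log(I₀e^{-l} + σ²) is nonconvex on ℝ whenever σ² > 0 and Y > σ²: specifically its second derivative h''(l) = I₀e^{-l}·[1 − Y σ²/(I₀e^{-l}+σ²)²] changes sign, being negative for l large enough that (I₀e^{-l}+σ²)² < Yσ². -/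
/-!
The derivative of a convex function is monotone, so its second derivative is nonnegative.
But `g(l) = I₀e^{-l} + σ²` decreases to `σ²` as `l → ∞`, and `σ⁴ < Yσ²` because `σ² < Y`,
so eventually `g(l)² < Yσ²`, where `h''(l) = I₀e^{-l} (1 - Yσ²/g(l)²)` is negative.
-/

open Real Filter Topology

lemma ConvexOn.deriv_deriv_nonneg {f : ℝ → ℝ} (hc : ConvexOn ℝ Set.univ f)
    (hf : Differentiable ℝ f) (x : ℝ) : 0 ≤ deriv (deriv f) x :=
  (monotoneOn_univ.mp (hc.monotoneOn_deriv fun x _ => hf x)).deriv_nonneg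

lemma mul_one_sub_div_sq_neg {a b c : ℝ} (ha : 0 < a) (hb : b ≠ 0) (hbc : b ^ 2 < c) :
    a * (1 - c / b ^ 2) < 0 :=
  mul_neg_of_pos_of_neg ha (sub_neg.mpr ((one_lt_div (by positivity)).mpr hbc))

lemma hasDerivAt_const_mul_exp_neg (I0 l : ℝ) :
    HasDerivAt (fun l => I0 * exp (-l)) (-(I0 * exp (-l))) l := by
  simpa using ((hasDerivAt_neg' l).exp).const_mul I0

noncomputable def shiftedPoissonFidelity (I0 s2 Y l : ℝ) : ℝ :=
  (I0 * exp (-l) + s2) - Y * log (I0 * exp (-l) + s2)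

section ShiftedPoissonFidelity

variable {I0 s2 : ℝ}

lemma exp_neg_add_pos (hI0 : 0 ≤ I0) (hs2 : 0 < s2) (l : ℝ) : 0 < I0 * exp (-l) + s2 := by
  positivity

lemma hasDerivAt_shiftedPoissonFidelity (Y : ℝ) {l : ℝ} (hg : I0 * exp (-l) + s2 ≠ 0) :
    HasDerivAt (shiftedPoissonFidelity I0 s2 Y)
      (-(I0 * exp (-l)) + Y * (I0 * exp (-l)) / (I0 * exp (-l) + s2)) l := by
  have hG := (hasDerivAt_const_mul_exp_neg I0 l).add_const s2
  exact (hG.sub ((hG.log hg).const_mul Y)).congr_deriv (by ring)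

lemma deriv_shiftedPoissonFidelity (hI0 : 0 ≤ I0) (hs2 : 0 < s2) (Y : ℝ) :
    deriv (shiftedPoissonFidelity I0 s2 Y) =
      fun l => -(I0 * exp (-l)) + Y * (I0 * exp (-l)) / (I0 * exp (-l) + s2) :=
  funext fun l =>
    (hasDerivAt_shiftedPoissonFidelity Y (exp_neg_add_pos hI0 hs2 l).ne').deriv

lemma hasDerivAt_deriv_shiftedPoissonFidelity (hI0 : 0 ≤ I0) (hs2 : 0 < s2) (Y l : ℝ) :
    HasDerivAt (deriv (shiftedPoissonFidelity I0 s2 Y))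
      (I0 * exp (-l) * (1 - Y * s2 / (I0 * exp (-l) + s2) ^ 2)) l := by
  rw [deriv_shiftedPoissonFidelity hI0 hs2]
  have hE := hasDerivAt_const_mul_exp_neg I0 l
  have hg := (exp_neg_add_pos hI0 hs2 l).ne'
  exact (hE.neg.add ((hE.const_mul Y).div (hE.add_const s2) hg)).congr_deriv
    (by field_simp; ring)

lemma exists_sq_exp_neg_add_lt (I0 : ℝ) {Y : ℝ} (hs2 : 0 < s2) (hY : s2 < Y) :
    ∃ l, (I0 * exp (-l) + s2) ^ 2 < Y * s2 := by
  have hlim : Tendsto (fun l => (I0 * exp (-l) + s2) ^ 2) atTop (𝓝 ((I0 * 0 + s2) ^ 2)) :=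
    ((tendsto_exp_neg_atTop_nhds_zero.const_mul I0).add_const s2).pow 2
  have hlt : (I0 * 0 + s2) ^ 2 < Y * s2 := by nlinarith
  exact (hlim.eventually (gt_mem_nhds hlt)).exists

end ShiftedPoissonFidelity

theorem stmt9 (I0 s2 Y : ℝ) (hI0 : 0 < I0) (hs2 : 0 < s2) (hY : s2 < Y)
    (g h : ℝ → ℝ)
    (hg : ∀ l, g l = I0 * Real.exp (-l) + s2)
    (hh : ∀ l, h l = g l - Y * Real.log (g l)) :
    (∀ l, deriv (deriv h) l =
        I0 * Real.exp (-l) * (1 - Y * s2 / (I0 * Real.exp (-l) + s2) ^ 2)) ∧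
    (∀ l, (I0 * Real.exp (-l) + s2) ^ 2 < Y * s2 → deriv (deriv h) l < 0) ∧
    ¬ ConvexOn ℝ Set.univ h := by
  obtain rfl : h = shiftedPoissonFidelity I0 s2 Y := funext fun l => by
    rw [hh, hg]; rfl
  have hd2 := hasDerivAt_deriv_shiftedPoissonFidelity hI0.le hs2 Y
  have hneg : ∀ l, (I0 * exp (-l) + s2) ^ 2 < Y * s2 →
      deriv (deriv (shiftedPoissonFidelity I0 s2 Y)) l < 0 := fun l hl =>
    (hd2 l).deriv ▸ mul_one_sub_div_sq_neg (by positivity)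
      (exp_neg_add_pos hI0.le hs2 l).ne' hl
  refine ⟨fun l => (hd2 l).deriv, hneg, fun hc => ?_⟩
  obtain ⟨l, hl⟩ := exists_sq_exp_neg_add_lt I0 hs2 hY
  have hdiff : Differentiable ℝ (shiftedPoissonFidelity I0 s2 Y) := fun x =>
    (hasDerivAt_shiftedPoissonFidelity Y (exp_neg_add_pos hI0.le hs2 x).ne').differentiableAt
  exact (hneg l hl).not_ge (hc.deriv_deriv_nonneg hdiff l)
end
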